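/- Let n ≥ 1, α ∈ ℝ, t ∈ (0,∞), p ∈ (1,∞), r ∈ (1,∞), q ∈ [1,∞), and let p', q', r' be conjugate exponents (1/p+1/p' = 1/q+1/q' = 1/r+1/r' = 1). Then for all measurable functions T, f : ℝⁿ → ℂ, ∫_{ℝⁿ} |T(x) f(x)| dx ≤ ‖T‖_{(KE^{-α,p'}_{q',r'})_t} · ‖f‖_{(KE^{α,p}_{q,r})_t}; in particular every T ∈ (KE^{-α,p'}_{q',r'})_t(ℝⁿ) induces a bounded linear functional f ↦ ∫_{ℝⁿ} T f on (KE^{α,p}_{q,r})_t(ℝⁿ). -/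

import Mathlib

open MeasureTheory Metric Set ENNReal
open scoped NNReal

noncomputable section

abbrev En (n : ℕ) : Type := EuclideanSpace ℝ (Fin n)

/-- Slice norm `‖f‖_{(E_r^q)_t}` for `ℝ≥0∞`-valued functions. -/
def sliceNorm (n : ℕ) (t r : ℝ) (q : ℝ≥0∞) (g : En n → ℝ≥0∞) : ℝ≥0∞ :=
  if q = ∞ then
    essSup (fun x => ((volume (ball x t))⁻¹ * ∫⁻ y in ball x t, g y ^ r) ^ (1 / r)) volume
  else
    (∫⁻ x, (((volume (ball x t))⁻¹ * ∫⁻ y in ball x t, g y ^ r) ^ (1 / r)) ^ q.toReal) ^ (1 / q.toReal)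

/-- Slice norm of a complex-valued function. -/
def sliceNormC (n : ℕ) (t r : ℝ) (q : ℝ≥0∞) (f : En n → ℂ) : ℝ≥0∞ :=
  sliceNorm n t r q fun y => (‖f y‖₊ : ℝ≥0∞)

/-- The ball `B_k = {x : |x| ≤ 2^k}`. -/
def ballZ (n : ℕ) (k : ℤ) : Set (En n) := closedBall 0 ((2 : ℝ) ^ k)

/-- The shell `S_k = B_k \ B_{k-1}`. -/
def shell (n : ℕ) (k : ℤ) : Set (En n) := ballZ n k \ ballZ n (k - 1)

/-- Homogeneous Herz-slice norm of an `ℝ≥0∞`-valued function. -/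
def herzHom (n : ℕ) (t r : ℝ) (q : ℝ≥0∞) (α : ℝ) (p : ℝ≥0∞) (g : En n → ℝ≥0∞) : ℝ≥0∞ :=
  if p = ∞ then
    ⨆ k : ℤ, (2 : ℝ≥0∞) ^ ((k : ℝ) * α) * sliceNorm n t r q ((shell n k).indicator g)
  else
    (∑' k : ℤ, ((2 : ℝ≥0∞) ^ ((k : ℝ) * α) * sliceNorm n t r q ((shell n k).indicator g)) ^ p.toReal) ^ (1 / p.toReal)

/-- Homogeneous Herz-slice norm of a complex-valued function. -/
def herzHomC (n : ℕ) (t r : ℝ) (q : ℝ≥0∞) (α : ℝ) (p : ℝ≥0∞) (f : En n → ℂ) : ℝ≥0∞ :=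
  herzHom n t r q α p fun y => (‖f y‖₊ : ℝ≥0∞)

/-- The `k`-th piece in the non-homogeneous decomposition: `B_0` for `k = 0`, `S_k` for `k ≥ 1`. -/
def pieceN (n : ℕ) (k : ℕ) : Set (En n) := if k = 0 then ballZ n 0 else shell n k

/-- Non-homogeneous Herz-slice norm of an `ℝ≥0∞`-valued function. -/
def herzNonHom (n : ℕ) (t r : ℝ) (q : ℝ≥0∞) (α : ℝ) (p : ℝ≥0∞) (g : En n → ℝ≥0∞) : ℝ≥0∞ :=
  if p = ∞ then
    ⨆ k : ℕ, (2 : ℝ≥0∞) ^ ((k : ℝ) * α) * sliceNorm n t r q ((pieceN n k).indicator g)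
  else
    (∑' k : ℕ, ((2 : ℝ≥0∞) ^ ((k : ℝ) * α) * sliceNorm n t r q ((pieceN n k).indicator g)) ^ p.toReal) ^ (1 / p.toReal)

/-- Non-homogeneous Herz-slice norm of a complex-valued function. -/
def herzNonHomC (n : ℕ) (t r : ℝ) (q : ℝ≥0∞) (α : ℝ) (p : ℝ≥0∞) (f : En n → ℂ) : ℝ≥0∞ :=
  herzNonHom n t r q α p fun y => (‖f y‖₊ : ℝ≥0∞)

/-- Hardy–Littlewood maximal operator. -/
def maximal (n : ℕ) (f : En n → ℂ) (x : En n) : ℝ≥0∞ :=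
  ⨆ (ρ : ℝ) (_ : 0 < ρ), (volume (ball x ρ))⁻¹ * ∫⁻ y in ball x ρ, (‖f y‖₊ : ℝ≥0∞)


/-! Averaging over balls of radius `t` and Fubini give
`∫ g h = ∫ₓ |B(x,t)|⁻¹ ∫_{B(x,t)} g h`, so Hölder's inequality in `L^r` on each ball followed by
Hölder's inequality in `L^q` in `x` bounds `∫ g h` by the product of the two slice norms.
Splitting `∫ |T f|` over the pieces `B_0, S_1, S_2, …`, inserting the weights
`2^{-kα} 2^{kα} = 1` and applying Hölder's inequality in `ℓ^p` gives the Herz-slice bound. -/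

section Holder

variable {X : Type*} [MeasurableSpace X] {μ : Measure X}

theorem lintegral_mul_le_essSup_mul_lintegral {f g : X → ℝ≥0∞} (hg : AEMeasurable g μ) :
    ∫⁻ x, f x * g x ∂μ ≤ essSup f μ * ∫⁻ x, g x ∂μ := by
  rw [← lintegral_const_mul'' _ hg]
  exact lintegral_mono_ae ((ae_le_essSup f).mono fun x hx => mul_le_mul_left hx _)

theorem lintegral_mul_le_eLpNorm_mul_eLpNorm {p q : ℝ≥0∞} [hpq : p.HolderConjugate q]
    {f g : X → ℝ≥0∞} (hf : AEMeasurable f μ) (hg : AEMeasurable g μ) :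
    ∫⁻ x, f x * g x ∂μ ≤ eLpNorm f p μ * eLpNorm g q μ := by
  obtain rfl | hp := eq_or_ne p ∞
  · obtain rfl : q = 1 := by simpa using hpq.inv_add_inv_eq_inv
    simpa [eLpNorm_exponent_top, eLpNormEssSup, eLpNorm_one_eq_lintegral_enorm] using
      lintegral_mul_le_essSup_mul_lintegral (f := f) hg
  obtain rfl | hq := eq_or_ne q ∞
  · obtain rfl : p = 1 := by simpa using hpq.inv_add_inv_eq_inv
    simpa [mul_comm, eLpNorm_exponent_top, eLpNormEssSup, eLpNorm_one_eq_lintegral_enorm] using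
      lintegral_mul_le_essSup_mul_lintegral (f := g) hf
  have hpq' := ENNReal.HolderConjugate.toReal_of_ne_top hp hq
  rw [eLpNorm_eq_lintegral_rpow_enorm_toReal (HolderConjugate.ne_zero p q) hp,
    eLpNorm_eq_lintegral_rpow_enorm_toReal (HolderConjugate.ne_zero q p) hq]
  simpa using ENNReal.lintegral_mul_le_Lp_mul_Lq μ hpq' hf hg

end Holder

section BallAverage

variable {G : Type*} [NormedAddCommGroup G] [MeasurableSpace G] [BorelSpace G]
  {μ : Measure G} [μ.IsAddLeftInvariant]

theorem setLIntegral_ball_eq_setLIntegral_ball_zero (g : G → ℝ≥0∞) (x : G) (t : ℝ) :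
    ∫⁻ y in ball x t, g y ∂μ = ∫⁻ z in ball 0 t, g (x + z) ∂μ := by
  rw [← (measurePreserving_add_left μ x).setLIntegral_comp_preimage_emb
    (measurableEmbedding_addLeft x), preimage_add_ball, sub_self]

variable [SecondCountableTopology G] [SFinite μ]

theorem measurable_setLIntegral_ball {g : G → ℝ≥0∞} (hg : Measurable g) (t : ℝ) :
    Measurable fun x => ∫⁻ y in ball x t, g y ∂μ := by
  simp_rw [setLIntegral_ball_eq_setLIntegral_ball_zero g _ t]
  exact (hg.comp measurable_add).lintegral_prod_right'

theorem lintegral_setLIntegral_ball {g : G → ℝ≥0∞} (hg : Measurable g) (t : ℝ) :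
    ∫⁻ x, ∫⁻ y in ball x t, g y ∂μ ∂μ = μ (ball 0 t) * ∫⁻ y, g y ∂μ := by
  have hm : Measurable (Function.uncurry fun x z : G => g (x + z)) := hg.comp measurable_add
  simp_rw [setLIntegral_ball_eq_setLIntegral_ball_zero g _ t]
  rw [lintegral_lintegral_swap hm.aemeasurable]
  simp_rw [lintegral_add_right_eq_self (μ := μ) g]
  rw [setLIntegral_const, mul_comm]

end BallAverage

def ballLrMean (n : ℕ) (t r : ℝ) (g : En n → ℝ≥0∞) (x : En n) : ℝ≥0∞ :=
  ((volume (ball x t))⁻¹ * ∫⁻ y in ball x t, g y ^ r) ^ (1 / r)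

section Slice

variable {n : ℕ} {t r : ℝ}

theorem sliceNorm_eq_eLpNorm {q : ℝ≥0∞} (hq : q ≠ 0) (g : En n → ℝ≥0∞) :
    sliceNorm n t r q g = eLpNorm (ballLrMean n t r g) q volume := by
  unfold sliceNorm
  split_ifs with hqt
  · simp [hqt, eLpNorm_exponent_top, eLpNormEssSup, ballLrMean]
  · simp [eLpNorm_eq_lintegral_rpow_enorm_toReal hq hqt, ballLrMean]

theorem measurable_ballLrMean {g : En n → ℝ≥0∞} (hg : Measurable g) :
    Measurable (ballLrMean n t r g) := by
  unfold ballLrMean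
  simp_rw [Measure.addHaar_ball_center volume _ t]
  exact (measurable_const.mul (measurable_setLIntegral_ball (hg.pow_const r) t)).pow_const _

theorem mul_setLIntegral_ball_le_ballLrMean_mul {r' : ℝ} (hrr' : r.HolderConjugate r')
    {g h : En n → ℝ≥0∞} (hg : Measurable g) (hh : Measurable h) (x : En n) :
    (volume (ball x t))⁻¹ * ∫⁻ y in ball x t, g y * h y
      ≤ ballLrMean n t r g x * ballLrMean n t r' h x := by
  simpa [ballLrMean, lintegral_smul_measure] using ENNReal.lintegral_mul_le_Lp_mul_Lq
    ((volume (ball x t))⁻¹ • volume.restrict (ball x t)) hrr' hg.aemeasurable hh.aemeasurable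

theorem lintegral_mul_le_lintegral_ballLrMean_mul (ht : 0 < t) {r' : ℝ}
    (hrr' : r.HolderConjugate r') {g h : En n → ℝ≥0∞} (hg : Measurable g) (hh : Measurable h) :
    ∫⁻ y, g y * h y ≤ ∫⁻ x, ballLrMean n t r g x * ballLrMean n t r' h x := by
  have hgh : Measurable fun y => g y * h y := hg.mul hh
  calc ∫⁻ y, g y * h y = ∫⁻ x, (volume (ball x t))⁻¹ * ∫⁻ y in ball x t, g y * h y := by
        simp_rw [Measure.addHaar_ball_center volume _ t]
        rw [lintegral_const_mul _ (measurable_setLIntegral_ball hgh t),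
          lintegral_setLIntegral_ball hgh, ← mul_assoc,
          ENNReal.inv_mul_cancel (measure_ball_pos volume _ ht).ne' measure_ball_lt_top.ne, one_mul]
    _ ≤ _ := lintegral_mono (mul_setLIntegral_ball_le_ballLrMean_mul hrr' hg hh)

theorem lintegral_mul_le_sliceNorm_mul_sliceNorm (ht : 0 < t) {r' : ℝ}
    (hrr' : r.HolderConjugate r') {q q' : ℝ≥0∞} [q.HolderConjugate q']
    {g h : En n → ℝ≥0∞} (hg : Measurable g) (hh : Measurable h) :
    ∫⁻ y, g y * h y ≤ sliceNorm n t r q g * sliceNorm n t r' q' h := by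
  rw [sliceNorm_eq_eLpNorm (HolderConjugate.ne_zero q q'),
    sliceNorm_eq_eLpNorm (HolderConjugate.ne_zero q' q)]
  exact (lintegral_mul_le_lintegral_ballLrMean_mul ht hrr' hg hh).trans
    (lintegral_mul_le_eLpNorm_mul_eLpNorm (measurable_ballLrMean hg).aemeasurable
      (measurable_ballLrMean hh).aemeasurable)

end Slice

theorem pieceN_eq_disjointed (n : ℕ) : pieceN n = disjointed fun k : ℕ => ballZ n k := by
  have hmono : Monotone fun k : ℕ => ballZ n k := fun j k hjk =>
    closedBall_subset_closedBall (zpow_le_zpow_right₀ one_le_two (by exact_mod_cast hjk))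
  funext k
  cases k with
  | zero => simp [pieceN]
  | succ k =>
    rw [← Order.succ_eq_add_one, hmono.disjointed_succ (not_isMax k), Order.succ_eq_add_one]
    simp [pieceN, shell]

theorem iUnion_pieceN (n : ℕ) : ⋃ k, pieceN n k = univ := by
  rw [pieceN_eq_disjointed, iUnion_disjointed, eq_univ_iff_forall]
  intro x
  obtain ⟨k, hk⟩ := pow_unbounded_of_one_lt ‖x‖ one_lt_two
  exact mem_iUnion.2 ⟨k, by simpa [ballZ] using hk.le⟩

theorem measurableSet_pieceN (n k : ℕ) : MeasurableSet (pieceN n k) := by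
  rw [pieceN_eq_disjointed]
  exact MeasurableSet.disjointed (fun k => measurableSet_closedBall) k

theorem lintegral_mul_eq_tsum_pieceN {n : ℕ} (g h : En n → ℝ≥0∞) :
    ∫⁻ x, g x * h x
      = ∑' k, ∫⁻ x, (pieceN n k).indicator g x * (pieceN n k).indicator h x := by
  have hdisj : Pairwise (Function.onFun Disjoint (pieceN n)) := by
    rw [pieceN_eq_disjointed]
    exact disjoint_disjointed _
  simp_rw [← indicator_mul, lintegral_indicator (measurableSet_pieceN n _)]
  rw [← lintegral_iUnion (measurableSet_pieceN n) hdisj, iUnion_pieceN, Measure.restrict_univ]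

theorem herzNonHom_eq_eLpNorm {n : ℕ} {t r α : ℝ} {q p : ℝ≥0∞} (hp : p ≠ 0) (g : En n → ℝ≥0∞) :
    herzNonHom n t r q α p g = eLpNorm (fun k : ℕ => (2 : ℝ≥0∞) ^ ((k : ℝ) * α)
      * sliceNorm n t r q ((pieceN n k).indicator g)) p Measure.count := by
  unfold herzNonHom
  split_ifs with hpt
  · simp [hpt, eLpNorm_exponent_top, eLpNormEssSup]
  · simp [eLpNorm_eq_lintegral_rpow_enorm_toReal hp hpt, lintegral_count]

theorem nonHomHerzSlice_holder_general
    (n : ℕ) (α t r r' : ℝ) (ht : 0 < t) (hr : 1 < r)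
    (hrr' : 1 / r + 1 / r' = 1)
    (p p' : ℝ≥0∞) (hpp' : 1 / p + 1 / p' = 1)
    (q q' : ℝ≥0∞) (hqq' : 1 / q + 1 / q' = 1)
    (T f : En n → ℂ) (hT : Measurable T) (hf : Measurable f) :
    ∫⁻ x, (‖T x‖₊ : ℝ≥0∞) * (‖f x‖₊ : ℝ≥0∞)
      ≤ herzNonHomC n t r' q' (-α) p' T * herzNonHomC n t r q α p f := by
  have hr'r : r'.HolderConjugate r :=
    (Real.holderConjugate_iff.2 ⟨hr, by simpa only [one_div] using hrr'⟩).symm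
  have : p.HolderConjugate p' := holderConjugate_iff.2 (by simpa only [one_div] using hpp')
  have : q.HolderConjugate q' := holderConjugate_iff.2 (by simpa only [one_div] using hqq')
  set a : ℕ → ℝ≥0∞ := fun k => (2 : ℝ≥0∞) ^ ((k : ℝ) * -α)
    * sliceNorm n t r' q' ((pieceN n k).indicator fun y => ‖T y‖₊)
  set b : ℕ → ℝ≥0∞ := fun k => (2 : ℝ≥0∞) ^ ((k : ℝ) * α)
    * sliceNorm n t r q ((pieceN n k).indicator fun y => ‖f y‖₊)
  have hweights (k : ℕ) : (2 : ℝ≥0∞) ^ ((k : ℝ) * -α) * 2 ^ ((k : ℝ) * α) = 1 := by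
    rw [← ENNReal.rpow_add _ _ two_ne_zero ofNat_ne_top, mul_neg, neg_add_cancel, rpow_zero]
  calc ∫⁻ x, (‖T x‖₊ : ℝ≥0∞) * ‖f x‖₊
      = ∑' k, ∫⁻ x, (pieceN n k).indicator (fun y => (‖T y‖₊ : ℝ≥0∞)) x
          * (pieceN n k).indicator (fun y => (‖f y‖₊ : ℝ≥0∞)) x := lintegral_mul_eq_tsum_pieceN _ _
    _ ≤ ∑' k, a k * b k := by
      refine ENNReal.tsum_le_tsum fun k => ?_
      rw [mul_mul_mul_comm, hweights, one_mul]
      exact lintegral_mul_le_sliceNorm_mul_sliceNorm ht hr'r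
        (hT.nnnorm.coe_nnreal_ennreal.indicator (measurableSet_pieceN n k))
        (hf.nnnorm.coe_nnreal_ennreal.indicator (measurableSet_pieceN n k))
    _ ≤ eLpNorm a p' .count * eLpNorm b p .count := by
      simpa [lintegral_count] using lintegral_mul_le_eLpNorm_mul_eLpNorm (μ := .count)
        (measurable_of_countable a).aemeasurable (measurable_of_countable b).aemeasurable
    _ = herzNonHomC n t r' q' (-α) p' T * herzNonHomC n t r q α p f := by
      rw [herzNonHomC, herzNonHomC, herzNonHom_eq_eLpNorm (HolderConjugate.ne_zero p' p),
        herzNonHom_eq_eLpNorm (HolderConjugate.ne_zero p p')]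

/-- Hölder's inequality for non-homogeneous Herz-slice spaces; every element of
the dual-index space induces a bounded linear functional. -/
theorem nonHomHerzSlice_holder
    (n : ℕ) (hn : 1 ≤ n) (α t r r' : ℝ) (ht : 0 < t) (hr : 1 < r)
    (hrr' : 1 / r + 1 / r' = 1)
    (p p' : ℝ≥0∞) (hp : 1 < p) (hp' : p ≠ ∞) (hpp' : 1 / p + 1 / p' = 1)
    (q q' : ℝ≥0∞) (hq : 1 ≤ q) (hq' : q ≠ ∞) (hqq' : 1 / q + 1 / q' = 1)
    (T f : En n → ℂ) (hT : Measurable T) (hf : Measurable f) :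
    ∫⁻ x, (‖T x‖₊ : ℝ≥0∞) * (‖f x‖₊ : ℝ≥0∞)
      ≤ herzNonHomC n t r' q' (-α) p' T * herzNonHomC n t r q α p f :=
  nonHomHerzSlice_holder_general n α t r r' ht hr hrr' p p' hpp' q q' hqq' T f hT hf
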